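/- arXiv:2605.28699 — 4 statements merged into one kernel-verified Lean document; each statement's English description precedes it below -/
import Mathlib

section
/- Let A be a finite nonempty set, R : A → ℝ, and v : A → ℝ. Define the regret-matching strategy σ : A → ℝ by σ(a) = max(R(a),0) / ∑_{b∈A} max(R(b),0) if ∑_{b∈A} max(R(b),0) > 0, and σ(a) = 1/|A| otherwise. Define r(a) = v(a) − ∑_{b∈A} σ(b)·v(b). Then ∑_{a∈A} max(R(a),0) · r(a) = 0. -/
/-!
Write `w a = max (R a) 0` and `S = ∑ w`. Then `∑ w a * r a = ⟨w, v⟩ - S ⟨σ, v⟩`, and `S σ = w`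
in both branches of the definition of `σ`: when `S > 0` by cancellation, and otherwise because
nonnegative weights with nonpositive sum all vanish.
-/

open Finset

theorem Finset.sum_mul_sub_sum_mul_eq_zero_of_sum_mul_eq {ι R : Type*} [CommRing R]
    (s : Finset ι) (w σ v : ι → R) (hσ : ∀ a ∈ s, (∑ b ∈ s, w b) * σ a = w a) :
    ∑ a ∈ s, w a * (v a - ∑ b ∈ s, σ b * v b) = 0 := by
  calc ∑ a ∈ s, w a * (v a - ∑ b ∈ s, σ b * v b)
      = ∑ a ∈ s, w a * v a - (∑ a ∈ s, w a) * ∑ b ∈ s, σ b * v b := by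
        rw [sum_mul, ← sum_sub_distrib]
        simp only [mul_sub]
    _ = ∑ a ∈ s, w a * v a - ∑ b ∈ s, ((∑ a ∈ s, w a) * σ b) * v b := by
        simp only [mul_sum, mul_assoc]
    _ = 0 := sub_eq_zero.mpr <| sum_congr rfl fun b hb => by rw [hσ b hb]

theorem Finset.sum_mul_ite_div_sum_eq {ι 𝕜 : Type*} [Field 𝕜] [LinearOrder 𝕜]
    [IsStrictOrderedRing 𝕜] {s : Finset ι} {w : ι → 𝕜} (hw : ∀ b ∈ s, 0 ≤ w b) (c : 𝕜)
    {a : ι} (ha : a ∈ s) :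
    (∑ b ∈ s, w b) * (if 0 < ∑ b ∈ s, w b then w a / ∑ b ∈ s, w b else c) = w a := by
  split_ifs with hpos
  · exact mul_div_cancel₀ _ hpos.ne'
  · have hzero : ∑ b ∈ s, w b = 0 := le_antisymm (not_lt.mp hpos) (sum_nonneg hw)
    rw [hzero, zero_mul, (sum_eq_zero_iff_of_nonneg hw).mp hzero a ha]

theorem tracer_regret_matching_orthogonality_general
    (A : Type*) [Fintype A]
    (R v σ r : A → ℝ)
    (hσ : ∀ a, σ a =
      if 0 < ∑ b, max (R b) 0
      then max (R a) 0 / ∑ b, max (R b) 0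
      else 1 / (Fintype.card A : ℝ))
    (hr : ∀ a, r a = v a - ∑ b, σ b * v b) :
    ∑ a, max (R a) 0 * r a = 0 := by
  simp only [hr]
  refine sum_mul_sub_sum_mul_eq_zero_of_sum_mul_eq _ _ _ _ fun a ha => ?_
  rw [hσ a]
  exact sum_mul_ite_div_sum_eq (fun b _ => le_max_right _ _) _ ha

/-- Orthogonality identity for regret matching: when the strategy `σ` is proportional to
the positive parts of the accumulated regrets `R` (uniform fallback otherwise), the
positive-part-weighted sum of the new instantaneous regrets is exactly zero. -/
theorem tracer_regret_matching_orthogonality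
    (A : Type*) [Fintype A] [Nonempty A]
    (R v σ r : A → ℝ)
    (hσ : ∀ a, σ a =
      if 0 < ∑ b, max (R b) 0
      then max (R a) 0 / ∑ b, max (R b) 0
      else 1 / (Fintype.card A : ℝ))
    (hr : ∀ a, r a = v a - ∑ b, σ b * v b) :
    ∑ a, max (R a) 0 * r a = 0 :=
  tracer_regret_matching_orthogonality_general A R v σ r hσ hr
end

section
/- Fix a horizon M ∈ ℕ and a finite nonempty action set A. Let v_m : A → ℝ for m = 1,…,M, and define recursively: R_0(a) = 0 for all a; σ_m(a) = max(R_{m−1}(a),0) / ∑_{b∈A} max(R_{m−1}(b),0) if ∑_{b∈A} max(R_{m−1}(b),0) > 0, and σ_m(a) = 1/|A| otherwise; r_m(a) = v_m(a) − ∑_{b∈A} σ_m(b)·v_m(b); and R_m(a) = R_{m−1}(a) + r_m(a). Then ∑_{a∈A} (max(R_M(a),0))² ≤ ∑_{m=1}^{M} ∑_{a∈A} r_m(a)². -/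
/-!
Regret matching plays proportionally to the positive part `R⁺` of the cumulative regret, so the
expected payoff is the `R⁺`-weighted average of the payoffs and the new regret vector `r` is
orthogonal to `R⁺` (Blackwell's condition). Since `((x + y)⁺)² ≤ (x⁺)² + 2 x⁺ y + y²`, the
potential `∑ (R⁺)²` then grows by at most `∑ r²` per round.
-/

open Finset

theorem sq_max_add_zero_le (x y : ℝ) :
    max (x + y) 0 ^ 2 ≤ max x 0 ^ 2 + 2 * (max x 0 * y) + y ^ 2 := by
  rcases le_or_gt (x + y) 0 with h | h
  · rw [max_eq_right h]
    nlinarith [sq_nonneg (max x 0 + y)]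
  · rw [max_eq_left h.le]
    nlinarith [le_max_left x 0, le_max_right x 0]

section

variable {A : Type*} [Fintype A]

noncomputable def regretMatching (R : A → ℝ) (a : A) : ℝ :=
  if 0 < ∑ b, max (R b) 0 then max (R a) 0 / ∑ b, max (R b) 0 else 1 / (Fintype.card A : ℝ)

theorem sum_max_zero_mul_sub_regretMatching_eq_zero (R v : A → ℝ) :
    ∑ a, max (R a) 0 * (v a - ∑ b, regretMatching R b * v b) = 0 := by
  set S := ∑ b, max (R b) 0
  by_cases hS : 0 < S
  · have hvalue : ∑ b, regretMatching R b * v b = (∑ b, max (R b) 0 * v b) / S := by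
      rw [sum_div]
      refine sum_congr rfl fun b _ => ?_
      rw [regretMatching, if_pos hS, div_mul_eq_mul_div]
    simp only [mul_sub, sum_sub_distrib, ← sum_mul, hvalue]
    field_simp
    ring
  · have hzero : ∀ a, max (R a) 0 = 0 :=
      fun a => (sum_eq_zero_iff_of_nonneg fun b _ => le_max_right (R b) 0).1
        (le_antisymm (not_lt.1 hS) (sum_nonneg fun b _ => le_max_right _ _)) a (mem_univ a)
    simp [hzero]

theorem sum_sq_max_add_zero_le_of_orthogonal (R r : A → ℝ)
    (horth : ∑ a, max (R a) 0 * r a = 0) :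
    ∑ a, max (R a + r a) 0 ^ 2 ≤ ∑ a, max (R a) 0 ^ 2 + ∑ a, r a ^ 2 := by
  calc ∑ a, max (R a + r a) 0 ^ 2
      ≤ ∑ a, (max (R a) 0 ^ 2 + 2 * (max (R a) 0 * r a) + r a ^ 2) :=
        sum_le_sum fun a _ => sq_max_add_zero_le (R a) (r a)
    _ = ∑ a, max (R a) 0 ^ 2 + ∑ a, r a ^ 2 := by
        rw [sum_add_distrib, sum_add_distrib, ← mul_sum, horth]
        ring

end

theorem tracer_regret_matching_potential_bound_general
    (M : ℕ) (A : Type*) [Fintype A]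
    (v σ r R : ℕ → A → ℝ)
    (hR0 : ∀ a, R 0 a = 0)
    (hσ : ∀ m, 1 ≤ m → ∀ a, σ m a =
      if 0 < ∑ b, max (R (m - 1) b) 0
      then max (R (m - 1) a) 0 / ∑ b, max (R (m - 1) b) 0
      else 1 / (Fintype.card A : ℝ))
    (hr : ∀ m, 1 ≤ m → ∀ a, r m a = v m a - ∑ b, σ m b * v m b)
    (hRrec : ∀ m, 1 ≤ m → ∀ a, R m a = R (m - 1) a + r m a) :
    ∑ a, (max (R M a) 0) ^ 2 ≤ ∑ m ∈ Finset.Icc 1 M, ∑ a, (r m a) ^ 2 := by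
  induction M with
  | zero => simp [hR0]
  | succ M ih =>
    have hstrategy : σ (M + 1) = regretMatching (R M) := funext (hσ (M + 1) M.succ_pos)
    have hregret :
        r (M + 1) = fun a => v (M + 1) a - ∑ b, regretMatching (R M) b * v (M + 1) b :=
      funext fun a => by rw [hr (M + 1) M.succ_pos, hstrategy]
    have hcumulative : R (M + 1) = fun a => R M a + r (M + 1) a :=
      funext (hRrec (M + 1) M.succ_pos)
    have horth : ∑ a, max (R M a) 0 * r (M + 1) a = 0 := by
      rw [hregret]
      exact sum_max_zero_mul_sub_regretMatching_eq_zero (R M) (v (M + 1))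
    rw [sum_Icc_succ_top (Nat.le_add_left 1 M), hcumulative]
    linarith [sum_sq_max_add_zero_le_of_orthogonal (R M) (r (M + 1)) horth]

/-- Blackwell potential bound for regret matching: under the regret-matching update, the
sum of squared positive parts of the cumulative regrets after `M` rounds is at most the
total accumulated squared norm of the instantaneous regret vectors. -/
theorem tracer_regret_matching_potential_bound
    (M : ℕ) (A : Type*) [Fintype A] [Nonempty A]
    (v σ r R : ℕ → A → ℝ)
    (hR0 : ∀ a, R 0 a = 0)
    (hσ : ∀ m, 1 ≤ m → ∀ a, σ m a =
      if 0 < ∑ b, max (R (m - 1) b) 0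
      then max (R (m - 1) a) 0 / ∑ b, max (R (m - 1) b) 0
      else 1 / (Fintype.card A : ℝ))
    (hr : ∀ m, 1 ≤ m → ∀ a, r m a = v m a - ∑ b, σ m b * v m b)
    (hRrec : ∀ m, 1 ≤ m → ∀ a, R m a = R (m - 1) a + r m a) :
    ∑ a, (max (R M a) 0) ^ 2 ≤ ∑ m ∈ Finset.Icc 1 M, ∑ a, (r m a) ^ 2 :=
  tracer_regret_matching_potential_bound_general M A v σ r R hR0 hσ hr hRrec
end

section
/- Fix a horizon M ∈ ℕ and Δ ≥ 0. Let v_m : Bool → ℝ for m = 1,…,M be value functions on the two-element action set {skip, speak} satisfying |v_m(speak) − v_m(skip)| ≤ Δ for every m. Define recursively: R_0(a) = 0; σ_m(a) = max(R_{m−1}(a),0) / (max(R_{m−1}(skip),0) + max(R_{m−1}(speak),0)) if this denominator is positive, and σ_m(a) = 1/2 otherwise; r_m(a) = v_m(a) − (σ_m(skip)·v_m(skip) + σ_m(speak)·v_m(speak)); and R_m(a) = R_{m−1}(a) + r_m(a). Then max(R_M(skip), R_M(speak)) ≤ Δ·√M. -/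
/-!
Regret matching keeps the potential `Φ(R) = ∑ₐ max(R a, 0)²` growing by at most `Δ²` per
round. Since `max(x + y, 0) ≤ max(x, 0) + y` whenever the right side is nonnegative, the new
potential is at most `∑ₐ (R⁺ a + r a)² = Φ(R) + 2 ∑ₐ R⁺ a · r a + ∑ₐ (r a)²`, and the cross term
vanishes because the strategy is proportional to `R⁺` (Blackwell's condition). With two actions
the regrets are `-σ(speak)·d` and `σ(skip)·d` for the value gap `d`, so `∑ₐ (r a)² ≤ d² ≤ Δ²`.
Hence `Φ(R_M) ≤ M Δ²`, and every regret is at most `√Φ(R_M) ≤ Δ √M`.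
-/

open Finset

namespace RegretMatching

section

variable {ι : Type*} [Fintype ι]

noncomputable def potential (R : ι → ℝ) : ℝ := ∑ a, max (R a) 0 ^ 2

noncomputable def strategy (R : ι → ℝ) (a : ι) : ℝ :=
  if 0 < ∑ b, max (R b) 0 then max (R a) 0 / ∑ b, max (R b) 0 else 1 / Fintype.card ι

def regret (σ v : ι → ℝ) (a : ι) : ℝ := v a - ∑ b, σ b * v b

lemma le_sqrt_potential (R : ι → ℝ) (a : ι) : R a ≤ √(potential R) :=
  calc R a ≤ max (R a) 0 := le_max_left _ _
    _ = √(max (R a) 0 ^ 2) := (Real.sqrt_sq (le_max_right _ _)).symm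
    _ ≤ √(potential R) := Real.sqrt_le_sqrt <|
      single_le_sum (f := fun b => max (R b) 0 ^ 2) (fun _ _ => sq_nonneg _) (mem_univ a)

lemma sq_max_add_le (x y : ℝ) : max (x + y) 0 ^ 2 ≤ (max x 0 + y) ^ 2 := by
  rcases le_total (x + y) 0 with h | h
  · simpa [max_eq_right h] using sq_nonneg (max x 0 + y)
  · rw [max_eq_left h]
    nlinarith [le_max_left x 0]

lemma potential_add_le (R r : ι → ℝ) (hR : ∑ a, max (R a) 0 * r a = 0) :
    potential (R + r) ≤ potential R + ∑ a, r a ^ 2 :=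
  calc potential (R + r) ≤ ∑ a, (max (R a) 0 + r a) ^ 2 :=
        sum_le_sum fun a _ => sq_max_add_le (R a) (r a)
    _ = potential R + 2 * ∑ a, max (R a) 0 * r a + ∑ a, r a ^ 2 := by
        simp only [potential, add_sq, sum_add_distrib, mul_sum, mul_assoc]
    _ = potential R + ∑ a, r a ^ 2 := by rw [hR]; ring

/-- Blackwell's condition for regret matching. -/
lemma sum_max_mul_regret_strategy (R v : ι → ℝ) :
    ∑ a, max (R a) 0 * regret (strategy R) v a = 0 := by
  set S := ∑ b, max (R b) 0
  by_cases hS : 0 < S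
  · have hσ (b : ι) : strategy R b = max (R b) 0 / S := if_pos hS
    calc ∑ a, max (R a) 0 * regret (strategy R) v a
        = ∑ a, max (R a) 0 * v a - S * ∑ b, strategy R b * v b := by
          simp only [regret, mul_sub, sum_sub_distrib, ← sum_mul, S]
      _ = 0 := by
          simp only [hσ, div_mul_eq_mul_div, ← sum_div, mul_div_cancel₀ _ hS.ne', sub_self]
  · have hzero : ∀ a ∈ univ, max (R a) 0 = 0 :=
      (sum_eq_zero_iff_of_nonneg fun b _ => le_max_right (R b) 0).mp
        (le_antisymm (not_lt.mp hS) (sum_nonneg fun b _ => le_max_right (R b) 0))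
    exact sum_eq_zero fun a ha => by rw [hzero a ha, zero_mul]

lemma strategy_nonneg (R : ι → ℝ) (a : ι) : 0 ≤ strategy R a := by
  rw [strategy]
  split_ifs with h
  · exact div_nonneg (le_max_right _ _) h.le
  · positivity

lemma potential_add_regret_strategy_le (R v : ι → ℝ) :
    potential (R + regret (strategy R) v) ≤ potential R + ∑ a, regret (strategy R) v a ^ 2 :=
  potential_add_le R _ (sum_max_mul_regret_strategy R v)

end

lemma strategy_bool (R : Bool → ℝ) (a : Bool) :
    strategy R a =
      if 0 < max (R false) 0 + max (R true) 0
      then max (R a) 0 / (max (R false) 0 + max (R true) 0)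
      else 1 / 2 := by
  rw [strategy, Fintype.sum_bool, add_comm (max (R true) 0), Fintype.card_bool]
  norm_num

lemma strategy_false_add_true (R : Bool → ℝ) : strategy R false + strategy R true = 1 := by
  rw [strategy_bool, strategy_bool]
  split_ifs with h
  · field_simp
  · norm_num

lemma sum_sq_regret_bool_le (σ v : Bool → ℝ) (hσ : ∀ a, 0 ≤ σ a) (hσ1 : σ false + σ true = 1) :
    ∑ a, regret σ v a ^ 2 ≤ (v true - v false) ^ 2 := by
  have hfalse : regret σ v false = -σ true * (v true - v false) := by
    simp only [regret, Fintype.sum_bool]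
    linear_combination (-v false) * hσ1
  have htrue : regret σ v true = σ false * (v true - v false) := by
    simp only [regret, Fintype.sum_bool]
    linear_combination (-v true) * hσ1
  have hgap : (v true - v false) ^ 2 - ∑ a, regret σ v a ^ 2
      = 2 * (σ false * σ true) * (v true - v false) ^ 2 := by
    rw [Fintype.sum_bool, hfalse, htrue]
    linear_combination (-(v true - v false) ^ 2 * (σ false + σ true + 1)) * hσ1
  have := mul_nonneg (mul_nonneg (hσ false) (hσ true)) (sq_nonneg (v true - v false))
  linarith

lemma potential_add_regret_strategy_bool_le (R v : Bool → ℝ) :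
    potential (R + regret (strategy R) v) ≤ potential R + (v true - v false) ^ 2 :=
  (potential_add_regret_strategy_le R v).trans <| add_le_add_right
    (sum_sq_regret_bool_le _ v (strategy_nonneg R) (strategy_false_add_true R)) _

end RegretMatching

open RegretMatching in
/-- Actions are encoded as `Bool`: `false = skip`, `true = speak`. -/
theorem tracer_binary_regret_matching_bound
    (M : ℕ) (Δ : ℝ) (hΔ : 0 ≤ Δ)
    (v σ r R : ℕ → Bool → ℝ)
    (hv : ∀ m, 1 ≤ m → m ≤ M → |v m true - v m false| ≤ Δ)
    (hR0 : ∀ a, R 0 a = 0)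
    (hσ : ∀ m, 1 ≤ m → ∀ a, σ m a =
      if 0 < max (R (m - 1) false) 0 + max (R (m - 1) true) 0
      then max (R (m - 1) a) 0 /
        (max (R (m - 1) false) 0 + max (R (m - 1) true) 0)
      else 1 / 2)
    (hr : ∀ m, 1 ≤ m → ∀ a,
      r m a = v m a - (σ m false * v m false + σ m true * v m true))
    (hRrec : ∀ m, 1 ≤ m → ∀ a, R m a = R (m - 1) a + r m a) :
    max (R M false) (R M true) ≤ Δ * Real.sqrt M := by
  have hstep : ∀ m, 1 ≤ m → m ≤ M → potential (R m) ≤ potential (R (m - 1)) + Δ ^ 2 := by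
    intro m hm hmM
    have hσm : σ m = strategy (R (m - 1)) :=
      funext fun a => (hσ m hm a).trans (strategy_bool _ a).symm
    have hRm : R m = R (m - 1) + regret (σ m) (v m) := funext fun a => by
      rw [hRrec m hm a, hr m hm a, Pi.add_apply, regret, Fintype.sum_bool, add_comm (σ m true * _)]
    have hgap := abs_le.mp (hv m hm hmM)
    calc potential (R m) ≤ potential (R (m - 1)) + (v m true - v m false) ^ 2 := by
          rw [hRm, hσm]; exact potential_add_regret_strategy_bool_le _ _
      _ ≤ potential (R (m - 1)) + Δ ^ 2 := add_le_add_right (sq_le_sq' hgap.1 hgap.2) _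
  have hpot : ∀ m ≤ M, potential (R m) ≤ m * Δ ^ 2 := by
    intro m
    induction m with
    | zero => intro; simp [potential, hR0]
    | succ n ih =>
      intro hn
      have hstep' := hstep (n + 1) n.succ_pos hn
      rw [Nat.add_sub_cancel] at hstep'
      push_cast
      linarith [ih (by omega)]
  calc max (R M false) (R M true) ≤ √(potential (R M)) :=
        max_le (le_sqrt_potential _ _) (le_sqrt_potential _ _)
    _ ≤ √(M * Δ ^ 2) := Real.sqrt_le_sqrt (hpot M le_rfl)
    _ = Δ * √M := by rw [Real.sqrt_mul' _ (sq_nonneg Δ), Real.sqrt_sq hΔ, mul_comm]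
end

section
/- Fix a horizon M ∈ ℕ, a finite nonempty phase set S, an activation map φ : {1,…,M} → S, and a constant C ≥ 0. Let v_m : Bool → ℝ for m = 1,…,M satisfy |v_m(a)| ≤ C for both actions a ∈ {skip, speak} and all m. Define per-phase regret matching recursively: R_0(s,a) = 0 for all s, a; at round m, σ_m(a) = max(R_{m−1}(φ(m),a),0) / (max(R_{m−1}(φ(m),skip),0) + max(R_{m−1}(φ(m),speak),0)) if this denominator is positive, and σ_m(a) = 1/2 otherwise; r_m(a) = v_m(a) − (σ_m(skip)·v_m(skip) + σ_m(speak)·v_m(speak)); R_m(φ(m),a) = R_{m−1}(φ(m),a) + r_m(a) and R_m(s,a) = R_{m−1}(s,a) for s ≠ φ(m). Then for every policy π : S → Bool, ∑_{m=1}^{M} ( v_m(π(φ(m))) − (σ_m(skip)·v_m(skip) + σ_m(speak)·v_m(speak)) ) ≤ 2·C·|S|·√M. -/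
set_option maxHeartbeats 800000

lemma sq_pos_add_aux (x t : ℝ) :
    (max (x + t) 0) ^ 2 ≤ (max x 0) ^ 2 + 2 * (max x 0) * t + t ^ 2 := by
  rcases le_or_gt (x + t) 0 with h | h
  · have h0 : max (x + t) 0 = 0 := max_eq_right h
    rw [h0]
    nlinarith [sq_nonneg (max x 0 + t)]
  · have h0 : max (x + t) 0 = x + t := max_eq_left h.le
    rw [h0]
    have h1 : x ≤ max x 0 := le_max_left x 0
    nlinarith

/-- Theorem 1 (convergence of TRACER), finite-horizon form: per-phase binary regret
matching (`false = skip`, `true = speak`) with values bounded by `C` guarantees that the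
overall regret of any deviation policy `π : S → Bool` is at most `2·C·|S|·√M`. -/
theorem tracer_convergence_regret_bound
    (M : ℕ) (S : Type*) [Fintype S] [Nonempty S] [DecidableEq S]
    (φ : ℕ → S) (C : ℝ) (hC : 0 ≤ C)
    (v σ r : ℕ → Bool → ℝ) (R : ℕ → S → Bool → ℝ)
    (hv : ∀ m, 1 ≤ m → m ≤ M → ∀ a, |v m a| ≤ C)
    (hR0 : ∀ s a, R 0 s a = 0)
    (hσ : ∀ m, 1 ≤ m → ∀ a, σ m a =
      if 0 < max (R (m - 1) (φ m) false) 0 + max (R (m - 1) (φ m) true) 0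
      then max (R (m - 1) (φ m) a) 0 /
        (max (R (m - 1) (φ m) false) 0 + max (R (m - 1) (φ m) true) 0)
      else 1 / 2)
    (hr : ∀ m, 1 ≤ m → ∀ a,
      r m a = v m a - (σ m false * v m false + σ m true * v m true))
    (hRupd : ∀ m, 1 ≤ m → ∀ a, R m (φ m) a = R (m - 1) (φ m) a + r m a)
    (hRkeep : ∀ m, 1 ≤ m → ∀ s, s ≠ φ m → ∀ a, R m s a = R (m - 1) s a)
    (π : S → Bool) :
    ∑ m ∈ Finset.Icc 1 M,
        (v m (π (φ m)) - (σ m false * v m false + σ m true * v m true)) ≤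
      2 * C * (Fintype.card S : ℝ) * Real.sqrt M := by
  -- Step 1: telescoping
  have tele : ∀ N : ℕ, ∑ m ∈ Finset.Icc 1 N, r m (π (φ m)) = ∑ s : S, R N s (π s) := by
    intro N
    induction N with
    | zero => simp [hR0]
    | succ N ih =>
      rw [Finset.sum_Icc_succ_top (by omega : 1 ≤ N + 1), ih]
      have key : ∀ s : S, R (N + 1) s (π s)
          = R N s (π s) + (if s = φ (N + 1) then r (N + 1) (π (φ (N + 1))) else 0) := by
        intro s
        by_cases h : s = φ (N + 1)
        · subst h
          have := hRupd (N + 1) (by omega) (π (φ (N + 1)))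
          simpa using this
        · have := hRkeep (N + 1) (by omega) s h (π s)
          simpa [h] using this
      simp only [key, Finset.sum_add_distrib, Finset.sum_ite_eq', Finset.mem_univ, if_true]
  -- Step 2: potential bound
  have pot : ∀ N : ℕ, N ≤ M → ∀ s : S,
      (max (R N s false) 0) ^ 2 + (max (R N s true) 0) ^ 2 ≤ 4 * C ^ 2 * N := by
    intro N
    induction N with
    | zero => intro _ s; simp [hR0]
    | succ N ih =>
      intro hNM s
      have ihs := ih (by omega) s
      by_cases h : s = φ (N + 1)
      · subst h
        set x := R N (φ (N + 1)) false with hx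
        set y := R N (φ (N + 1)) true with hy
        have hsimp : R (N + 1 - 1) (φ (N + 1)) false = x ∧ R (N + 1 - 1) (φ (N + 1)) true = y := by
          constructor <;> simp [hx, hy]
        have hRf : R (N + 1) (φ (N + 1)) false = x + r (N + 1) false := by
          simpa [hsimp.1] using hRupd (N + 1) (by omega) false
        have hRt : R (N + 1) (φ (N + 1)) true = y + r (N + 1) true := by
          simpa [hsimp.2] using hRupd (N + 1) (by omega) true
        set vf := v (N + 1) false
        set vt := v (N + 1) true
        set σf := σ (N + 1) false with hσf0
        set σt := σ (N + 1) true with hσt0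
        have hσf : σf = if 0 < max x 0 + max y 0 then max x 0 / (max x 0 + max y 0) else 1 / 2 := by
          rw [hσf0, hσ (N + 1) (by omega) false]; simp [hsimp.1, hsimp.2, ← hx, ← hy]
        have hσt : σt = if 0 < max x 0 + max y 0 then max y 0 / (max x 0 + max y 0) else 1 / 2 := by
          rw [hσt0, hσ (N + 1) (by omega) true]; simp [hsimp.1, hsimp.2, ← hx, ← hy]
        have hrf : r (N + 1) false = vf - (σf * vf + σt * vt) := hr (N + 1) (by omega) false
        have hrt : r (N + 1) true = vt - (σf * vf + σt * vt) := hr (N + 1) (by omega) true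
        have hxpos : (0:ℝ) ≤ max x 0 := le_max_right x 0
        have hypos : (0:ℝ) ≤ max y 0 := le_max_right y 0
        -- σ is a probability distribution
        have hσsum : σf + σt = 1 := by
          rw [hσf, hσt]
          by_cases hD : 0 < max x 0 + max y 0
          · rw [if_pos hD, if_pos hD]; field_simp
          · rw [if_neg hD, if_neg hD]; norm_num
        have hσfpos : 0 ≤ σf := by
          rw [hσf]; split
          · positivity
          · norm_num
        have hσtpos : 0 ≤ σt := by
          rw [hσt]; split
          · positivity
          · norm_num
        -- cross term vanishes
        have hcross : max x 0 * r (N + 1) false + max y 0 * r (N + 1) true = 0 := by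
          rw [hrf, hrt]
          by_cases hD : 0 < max x 0 + max y 0
          · rw [hσf, hσt, if_pos hD, if_pos hD]
            field_simp
            ring
          · have hx0 : max x 0 = 0 := by linarith
            have hy0 : max y 0 = 0 := by linarith
            rw [hx0, hy0]; ring
        -- instantaneous regrets bounded
        have hvf : |vf| ≤ C := hv (N + 1) (by omega) (by omega) false
        have hvt : |vt| ≤ C := hv (N + 1) (by omega) (by omega) true
        have hvf' := abs_le.mp hvf
        have hvt' := abs_le.mp hvt
        have hrsq : r (N + 1) false ^ 2 + r (N + 1) true ^ 2 ≤ 4 * C ^ 2 := by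
          rw [hrf, hrt]
          have e1 : vf - (σf * vf + σt * vt) = σt * (vf - vt) := by
            have : σf = 1 - σt := by linarith
            rw [this]; ring
          have e2 : vt - (σf * vf + σt * vt) = σf * (vt - vf) := by
            have : σt = 1 - σf := by linarith
            rw [this]; ring
          rw [e1, e2]
          nlinarith [sq_nonneg (vf - vt), mul_nonneg hσfpos hσtpos, sq_nonneg (vf + vt),
            sq_nonneg (σf - σt), sq_nonneg (σf + σt)]
        have b1 := sq_pos_add_aux x (r (N + 1) false)
        have b2 := sq_pos_add_aux y (r (N + 1) true)
        rw [hRf, hRt]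
        push_cast
        linarith [b1, b2, hcross, hrsq, ihs]
      · have hf := hRkeep (N + 1) (by omega) s h false
        have ht := hRkeep (N + 1) (by omega) s h true
        simp only [Nat.add_sub_cancel] at hf ht
        rw [hf, ht]
        push_cast
        linarith [sq_nonneg C, ihs]
  -- Step 3: combine
  have hRb : ∀ s : S, R M s (π s) ≤ 2 * C * Real.sqrt M := by
    intro s
    have h := pot M le_rfl s
    have h1 : (max (R M s (π s)) 0) ^ 2 ≤ 4 * C ^ 2 * M := by
      cases hps : π s
      · rw [hps] at *; nlinarith [sq_nonneg (max (R M s true) 0)]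
      · rw [hps] at *; nlinarith [sq_nonneg (max (R M s false) 0)]
    have h2 : R M s (π s) ≤ max (R M s (π s)) 0 := le_max_left _ _
    have h3 : max (R M s (π s)) 0 ≤ Real.sqrt (4 * C ^ 2 * M) := by
      have := Real.sqrt_le_sqrt h1
      rwa [Real.sqrt_sq (le_max_right _ 0)] at this
    have h4 : Real.sqrt (4 * C ^ 2 * M) = 2 * C * Real.sqrt M := by
      rw [show (4 : ℝ) * C ^ 2 * M = (2 * C) ^ 2 * M by ring,
        Real.sqrt_mul (by positivity), Real.sqrt_sq (by positivity)]
    linarith [h3, h4.le, h4.ge]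
  have hsum : ∑ m ∈ Finset.Icc 1 M,
      (v m (π (φ m)) - (σ m false * v m false + σ m true * v m true))
      = ∑ m ∈ Finset.Icc 1 M, r m (π (φ m)) := by
    refine Finset.sum_congr rfl fun m hm => ?_
    rw [hr m (Finset.mem_Icc.mp hm).1 (π (φ m))]
  rw [hsum, tele M]
  calc ∑ s : S, R M s (π s) ≤ ∑ _s : S, 2 * C * Real.sqrt M :=
        Finset.sum_le_sum fun s _ => hRb s
    _ = (Fintype.card S : ℝ) * (2 * C * Real.sqrt M) := by
        rw [Finset.sum_const, Finset.card_univ, nsmul_eq_mul]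
    _ = 2 * C * (Fintype.card S : ℝ) * Real.sqrt M := by ring
end
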